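/- The polynomial g₁(x, 8, 11) = Σ_{j=0}^{8} (8!/j!)·C(19−j, 8−j)·x^j is irreducible over ℚ. -/

import Mathlib

/-!
`g₁(x, 8, 11)` is monic, so by Gauss's lemma it suffices that its reduction `f` over `𝔽₂₃` is
irreducible. A reducible monic `f` of degree `8` over `𝔽_q` has an irreducible factor of some degree
`k ≤ 4`, and that factor divides `X ^ q ^ k - X`; so it is enough that `f` is coprime to
`X ^ 23 ^ k - X` for `k = 1, …, 4`. Since `r ^ 23 = r(X ^ 23)` over `𝔽₂₃`, the residue of
`X ^ 23 ^ (k + 1)` modulo `f` is the residue of `X ^ 23 ^ k` composed with that of `X ^ 23`, so these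
residues are a finite computation of iterated compositions modulo `f`. Coprimality is then
witnessed by an inverse of `X ^ 23 ^ k - X` modulo `f`.
-/

open Polynomial Finset

/- A list `[c₀, …, c_{d-1}]` stands both for the polynomial `∑ cᵢ Xⁱ` (`toPoly`) and, as the first
argument `f` of the operations below, for the monic modulus `X ^ d + ∑ cᵢ Xⁱ` (`modulus`). -/
namespace CoeffList

variable {K : Type*} [CommRing K]

noncomputable def toPoly : List K → K[X]
  | [] => 0
  | c :: v => C c + X * toPoly v

noncomputable def modulus (f : List K) : K[X] := X ^ f.length + toPoly f

def add : List K → List K → List K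
  | [], v => v
  | u, [] => u
  | a :: u, b :: v => (a + b) :: add u v

def smul (c : K) (v : List K) : List K := v.map (c * ·)

def mulXMod (f v : List K) : List K :=
  if v.length < f.length then 0 :: v
  else add (0 :: v.dropLast) (smul (-v.getLastD 0) (List.replicate (v.length - f.length) 0 ++ f))

def mulMod (f u v : List K) : List K := u.foldr (fun c w => add (smul c v) (mulXMod f w)) []

def compMod (f u v : List K) : List K := u.foldr (fun c w => add [c] (mulMod f v w)) []

def xPowPowMod (f : List K) (q : ℕ) : ℕ → List K
  | 0 => [0, 1]
  | k + 1 => compMod f (xPowPowMod f q k) ((mulXMod f)^[q] [1])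

@[simp] lemma toPoly_nil : toPoly ([] : List K) = 0 := rfl

@[simp] lemma toPoly_cons (c : K) (v : List K) : toPoly (c :: v) = C c + X * toPoly v := rfl

lemma toPoly_add (u v : List K) : toPoly (add u v) = toPoly u + toPoly v := by
  fun_induction add u v <;> simp_all only [toPoly_nil, toPoly_cons, zero_add, add_zero, map_add]
  ring

lemma toPoly_smul (c : K) (v : List K) : toPoly (smul c v) = C c * toPoly v := by
  induction v with
  | nil => simp [smul]
  | cons b v ih =>
    simp only [smul, List.map_cons, toPoly_cons, map_mul] at ih ⊢
    rw [ih]; ring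

lemma toPoly_append (u v : List K) : toPoly (u ++ v) = toPoly u + X ^ u.length * toPoly v := by
  induction u with
  | nil => simp
  | cons c u ih =>
    simp only [List.cons_append, toPoly_cons, ih, List.length_cons]; ring

lemma toPoly_replicate_zero (n : ℕ) : toPoly (List.replicate n (0 : K)) = 0 := by
  induction n with
  | zero => simp
  | succ n ih => simp [List.replicate_succ, ih]

lemma toPoly_eq_dropLast_add (v : List K) :
    toPoly v = toPoly v.dropLast + C (v.getLastD 0) * X ^ (v.length - 1) := by
  rcases eq_or_ne v [] with rfl | hv
  · simp
  conv_lhs => rw [← List.dropLast_append_getLast hv, toPoly_append]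
  simp [List.getLastD_eq_getLast?, List.getLast?_eq_some_getLast hv, List.length_dropLast]

section Root

variable {A : Type*} [CommRing A] [Algebra K A] {f : List K} {a : A}

lemma aeval_mulXMod (ha : aeval a (modulus f) = 0) (v : List K) :
    aeval a (toPoly (mulXMod f v)) = a * aeval a (toPoly v) := by
  have hroot : a ^ f.length = -aeval a (toPoly f) := by
    simpa [modulus, add_eq_zero_iff_eq_neg] using ha
  unfold mulXMod
  split_ifs with hlen
  · simp
  rw [toPoly_eq_dropLast_add v]
  rcases eq_or_ne v [] with rfl | hv
  · simp [toPoly_add, toPoly_smul]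
  have hpos : 0 < v.length := List.length_pos_of_ne_nil hv
  obtain ⟨m, hm⟩ : ∃ m, v.length = m + f.length := ⟨v.length - f.length, by omega⟩
  simp only [toPoly_add, toPoly_cons, toPoly_smul, toPoly_append, toPoly_replicate_zero,
    List.length_replicate, map_add, map_mul, map_neg, aeval_C, aeval_X, map_pow, hm,
    Nat.add_sub_cancel, map_zero, zero_add]
  have : a * a ^ (m + f.length - 1) = a ^ m * a ^ f.length := by
    rw [← pow_succ', ← pow_add]; congr 1; omega
  linear_combination -(algebraMap K A (v.getLastD 0)) * this
    - (algebraMap K A (v.getLastD 0) * a ^ m) * hroot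

lemma aeval_mulMod (ha : aeval a (modulus f) = 0) (u v : List K) :
    aeval a (toPoly (mulMod f u v)) = aeval a (toPoly u) * aeval a (toPoly v) := by
  induction u with
  | nil => simp [mulMod]
  | cons c u ih =>
    simp only [mulMod, List.foldr_cons] at ih ⊢
    rw [toPoly_add, map_add, toPoly_smul, aeval_mulXMod ha, ih]
    simp only [map_mul, aeval_C, toPoly_cons, map_add, aeval_X]; ring

lemma aeval_compMod (ha : aeval a (modulus f) = 0) (u v : List K) :
    aeval a (toPoly (compMod f u v)) = aeval (aeval a (toPoly v)) (toPoly u) := by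
  induction u with
  | nil => simp [compMod]
  | cons c u ih =>
    simp only [compMod, List.foldr_cons] at ih ⊢
    rw [toPoly_add, map_add, aeval_mulMod ha, ih]
    simp

lemma aeval_iterate_mulXMod (ha : aeval a (modulus f) = 0) (n : ℕ) :
    aeval a (toPoly ((mulXMod f)^[n] [1])) = a ^ n := by
  induction n with
  | zero => simp
  | succ n ih => rw [Function.iterate_succ_apply', aeval_mulXMod ha, ih, pow_succ']

end Root

variable {p : ℕ} [Fact p.Prime]

lemma aeval_pow_prime {A : Type*} [CommRing A] [Algebra (ZMod p) A] (r : (ZMod p)[X]) (a : A) :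
    aeval a r ^ p = aeval (a ^ p) r := by
  rw [← map_pow, ← ZMod.expand_card, expand_aeval]

lemma aeval_xPowPowMod {A : Type*} [CommRing A] [Algebra (ZMod p) A] {f : List (ZMod p)} {a : A}
    (ha : aeval a (modulus f) = 0) (k : ℕ) : aeval a (toPoly (xPowPowMod f p k)) = a ^ p ^ k := by
  induction k with
  | zero => simp [xPowPowMod]
  | succ k ih =>
    rw [xPowPowMod, aeval_compMod ha, aeval_iterate_mulXMod ha, ← aeval_pow_prime, ih, ← pow_mul,
      ← pow_succ]

theorem isCoprime_modulus_X_pow_pow_sub_X {f w : List (ZMod p)} {k m : ℕ}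
    (hw : mulMod f (add (xPowPowMod f p k) [0, -1]) w = 1 :: List.replicate m 0) :
    IsCoprime (modulus f) (X ^ p ^ k - X) := by
  set x := AdjoinRoot.root (modulus f)
  have hx : aeval x (modulus f) = 0 := by simp [x, AdjoinRoot.aeval_eq]
  have hinv := congrArg (fun v : List (ZMod p) => aeval x (toPoly v)) hw
  have hmk : aeval x ((X ^ p ^ k - X) * toPoly w) = aeval x (1 : (ZMod p)[X]) := by
    simpa [aeval_mulMod hx, toPoly_add, aeval_xPowPowMod hx, toPoly_replicate_zero, sub_eq_add_neg]
      using hinv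
  rw [AdjoinRoot.aeval_eq, AdjoinRoot.aeval_eq, AdjoinRoot.mk_eq_mk] at hmk
  obtain ⟨c, hc⟩ := hmk
  exact ⟨-c, toPoly w, by linear_combination hc⟩

end CoeffList

open CoeffList

theorem Polynomial.Monic.irreducible_of_isCoprime_X_pow_card_pow_sub_X {F : Type*} [Field F]
    [Finite F] {f : F[X]} (hf : f.Monic) (hf1 : f ≠ 1)
    (h : ∀ k ∈ Ioc 0 (f.natDegree / 2), IsCoprime f (X ^ Nat.card F ^ k - X)) : Irreducible f := by
  rw [hf.irreducible_iff_lt_natDegree_lt hf1]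
  intro g hg hgdeg hgf
  obtain ⟨d, hd, hdg⟩ := WfDvdMonoid.exists_irreducible_factor
    (not_isUnit_of_natDegree_pos g (mem_Ioc.1 hgdeg).1) hg.ne_zero
  have hdeg : d.natDegree ∈ Ioc 0 (f.natDegree / 2) :=
    mem_Ioc.2 ⟨hd.natDegree_pos, (natDegree_le_of_dvd hdg hg.ne_zero).trans (mem_Ioc.1 hgdeg).2⟩
  exact hd.not_isUnit <| (h _ hdeg).isUnit_of_dvd' (hdg.trans hgf)
    (hd.natDegree_dvd_iff_dvd_X_pow_card_pow_sub_X.1 dvd_rfl)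

open scoped Nat

noncomputable def g₁ (R : Type*) [Semiring R] (n s : ℕ) : R[X] :=
  ∑ j ∈ range (n + 1), C ((n ! / j ! * (n + s - j).choose (n - j) : ℕ) : R) * X ^ j

section G1
variable (R : Type*) [Semiring R] (n s : ℕ)

lemma map_g₁ {S : Type*} [Semiring S] (f : R →+* S) : (g₁ R n s).map f = g₁ S n s := by
  simp [g₁, Polynomial.map_sum]

lemma natDegree_g₁_le : (g₁ R n s).natDegree ≤ n :=
  natDegree_sum_le_of_forall_le _ _ fun _ hj =>
    (natDegree_C_mul_X_pow_le _ _).trans (Nat.lt_succ_iff.1 (mem_range.1 hj))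

lemma coeff_g₁_self : (g₁ R n s).coeff n = 1 := by
  simp only [g₁, finsetSum_coeff, coeff_C_mul_X_pow]
  simp [Nat.div_self (Nat.factorial_pos n)]

lemma monic_g₁ : (g₁ R n s).Monic :=
  monic_of_natDegree_le_of_coeff_eq_one n (natDegree_g₁_le R n s) (coeff_g₁_self R n s)

lemma natDegree_g₁ [Nontrivial R] : (g₁ R n s).natDegree = n :=
  natDegree_eq_of_le_of_coeff_ne_zero (natDegree_g₁_le R n s) (by simp [coeff_g₁_self])

end G1

instance : Fact (Nat.Prime 23) := ⟨by norm_num⟩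

lemma g₁_eight_eleven_zmod : g₁ (ZMod 23) 8 11 = modulus [4, 15, 1, 15, 8, 13, 21, 4] := by
  simp only [g₁, modulus, sum_range_succ, sum_range_zero, toPoly_cons, toPoly_nil,
    List.length_cons, List.length_nil]
  norm_num [Nat.factorial, Nat.choose]
  reduce_mod_char
  simp only [map_one]
  ring

theorem irreducible_g₁_eight_eleven_zmod : Irreducible (g₁ (ZMod 23) 8 11) := by
  refine (monic_g₁ _ 8 11).irreducible_of_isCoprime_X_pow_card_pow_sub_X ?_ ?_
  · exact ne_of_apply_ne natDegree (by rw [natDegree_g₁, natDegree_one]; norm_num)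
  rw [natDegree_g₁, g₁_eight_eleven_zmod, Nat.card_zmod]
  intro k hk
  obtain ⟨w, hw⟩ : ∃ w, mulMod [(4 : ZMod 23), 15, 1, 15, 8, 13, 21, 4]
      (add (xPowPowMod [4, 15, 1, 15, 8, 13, 21, 4] 23 k) [0, -1]) w = 1 :: List.replicate 7 0 := by
    obtain rfl | rfl | rfl | rfl : k = 1 ∨ k = 2 ∨ k = 3 ∨ k = 4 := by simp only [mem_Ioc] at hk; omega
    exacts [⟨[15, 1, 10, 12, 20, 10, 22, 5], by decide +kernel⟩,
      ⟨[17, 8, 16, 21, 5, 2, 13, 4], by decide +kernel⟩,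
      ⟨[2, 21, 16, 19, 9, 0, 3, 20], by decide +kernel⟩,
      ⟨[7, 12, 22, 14, 16, 6, 16, 13], by decide +kernel⟩]
  exact isCoprime_modulus_X_pow_pow_sub_X hw

theorem stmt_19 :
    Irreducible (∑ j ∈ Finset.range (8 + 1),
      C (((Nat.factorial 8 / Nat.factorial j) * Nat.choose (8 + 11 - j) (8 - j) : ℕ) : ℚ) * X ^ j : ℚ[X]) := by
  have hℤ : Irreducible (g₁ ℤ 8 11) :=
    (monic_g₁ ℤ 8 11).irreducible_of_irreducible_map (Int.castRingHom (ZMod 23)) _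
      (by rw [map_g₁]; exact irreducible_g₁_eight_eleven_zmod)
  have hℚ := (monic_g₁ ℤ 8 11).irreducible_iff_irreducible_map_fraction_map (K := ℚ) |>.1 hℤ
  rw [map_g₁] at hℚ
  exact hℚ
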